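/- In a Merkle tree over 2^k leaves built with hash h, if an adversary produces an index j, a leaf value x with x ≠ xs_j, and a path that verifies against root(xs), then there exist two distinct pairs (a,b) ≠ (a',b') with h(a,b) = h(a',b'); i.e., a false membership proof yields an explicit collision of h. -/
import Mathlib


/-- Left half of a vector of `2^(k+1)` leaves. -/
def merkleLeft {S : Type*} (k : ℕ) (xs : Fin (2 ^ (k + 1)) → S) : Fin (2 ^ k) → S :=
  fun i => xs ⟨i.1, by
    have h2 : (2 : ℕ) ^ (k + 1) = 2 ^ k * 2 := pow_succ 2 k
    have := i.2
    omega⟩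

/-- Right half of a vector of `2^(k+1)` leaves. -/
def merkleRight {S : Type*} (k : ℕ) (xs : Fin (2 ^ (k + 1)) → S) : Fin (2 ^ k) → S :=
  fun i => xs ⟨2 ^ k + i.1, by
    have h2 : (2 : ℕ) ^ (k + 1) = 2 ^ k * 2 := pow_succ 2 k
    have := i.2
    omega⟩

/-- Merkle root of `2^k` leaves, built with hash `h`. -/
def merkleRoot {S : Type*} (h : S → S → S) : (k : ℕ) → (Fin (2 ^ k) → S) → S
  | 0, xs => xs ⟨0, by norm_num⟩
  | k + 1, xs => h (merkleRoot h k (merkleLeft k xs)) (merkleRoot h k (merkleRight k xs))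

/-- Fold a candidate leaf `x` at index `j` up the tree using the `k` sibling
values `path` (ordered leaf-to-root); the bits of `j` decide the argument order
at each level. -/
def merkleFold {S : Type*} (h : S → S → S) : (k : ℕ) → ℕ → S → (Fin k → S) → S
  | 0, _, x, _ => x
  | k + 1, j, x, path =>
    let top := path ⟨k, Nat.lt_succ_self k⟩
    let rest : Fin k → S := fun i => path i.castSucc
    if j < 2 ^ k then h (merkleFold h k j x rest) top
    else h top (merkleFold h k (j - 2 ^ k) x rest)


theorem merkle_aux {S : Type*} (h : S → S → S) :
    ∀ (k : ℕ) (xs : Fin (2 ^ k) → S) (j : ℕ) (hj : j < 2 ^ k) (x : S) (path : Fin k → S),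
    x ≠ xs ⟨j, hj⟩ → merkleFold h k j x path = merkleRoot h k xs →
    ∃ p q : S × S, p ≠ q ∧ h p.1 p.2 = h q.1 q.2 := by
  intro k
  induction k with
  | zero =>
    intro xs j hj x path hne hver
    simp [merkleFold, merkleRoot] at hver
    exact absurd (hver.trans (congrArg xs (Fin.ext (by omega)))) hne
  | succ k ih =>
    intro xs j hj x path hne hver
    rw [merkleFold] at hver
    have h2 : (2 : ℕ) ^ (k + 1) = 2 ^ k * 2 := pow_succ 2 k
    by_cases hc : j < 2 ^ k
    · rw [if_pos hc] at hver
      set f := merkleFold h k j x (fun i => path i.castSucc) with hf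
      set t := path ⟨k, Nat.lt_succ_self k⟩ with ht
      set L := merkleRoot h k (merkleLeft k xs) with hL
      set R := merkleRoot h k (merkleRight k xs) with hR
      by_cases hp : (f, t) = (L, R)
      · have hfL : f = L := (Prod.mk.injEq .. ▸ hp).1
        refine ih (merkleLeft k xs) j hc x _ ?_ hfL
        intro hx
        exact hne (hx.trans (congrArg xs (Fin.ext rfl)))
      · exact ⟨(f, t), (L, R), hp, hver⟩
    · rw [if_neg hc] at hver
      have hj' : j - 2 ^ k < 2 ^ k := by omega
      set f := merkleFold h k (j - 2 ^ k) x (fun i => path i.castSucc) with hf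
      set t := path ⟨k, Nat.lt_succ_self k⟩ with ht
      set L := merkleRoot h k (merkleLeft k xs) with hL
      set R := merkleRoot h k (merkleRight k xs) with hR
      by_cases hp : (t, f) = (L, R)
      · have hfR : f = R := (Prod.mk.injEq .. ▸ hp).2
        refine ih (merkleRight k xs) (j - 2 ^ k) hj' x _ ?_ hfR
        intro hx
        refine hne (hx.trans (congrArg xs (Fin.ext ?_)))
        simp [merkleRight]
        omega
      · exact ⟨(t, f), (L, R), hp, hver⟩

/-- A false Merkle membership proof yields an explicit collision of `h`: if a
leaf value `x ≠ xs j` verifies at index `j` against `merkleRoot h k xs`, then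
there exist two distinct pairs with the same hash. -/
theorem stmt_7 {S : Type*} (h : S → S → S) (k : ℕ) (xs : Fin (2 ^ k) → S)
    (j : Fin (2 ^ k)) (x : S) (path : Fin k → S)
    (hne : x ≠ xs j)
    (hver : merkleFold h k j.1 x path = merkleRoot h k xs) :
    ∃ p q : S × S, p ≠ q ∧ h p.1 p.2 = h q.1 q.2 := by
  exact merkle_aux h k xs j.1 j.2 x path (by simpa using hne) hver
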